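/- Let G be a symmetric nonnegative n×n matrix, β ∈ (0,1), δ > 0, 0 < μ < βδ, with δρ(G) < 1 and M := (I − δG)^{-1}. Then the matrix δG + (β²I + μ²G² − 2βμG)M is entrywise nonnegative; in fact δG + (βI − μG)²M ≥ β²I + (1−β²)δG entrywise. -/

import Mathlib

/-!
Write `μ = βδ - ε` with `ε ≥ 0`, so that `βI - μG = β(I - δG) + εG`. As `G` commutes with
`I - δG`, multiplying the square by `M = (I - δG)⁻¹` gives
`δG + (βI - μG)²M = β²I + (1 - β²)δG + 2βεG + ε²G²M`,
and the last two terms are entrywise nonnegative because `M = ∑ (δG)ᵏ` is: the Neumann series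
converges since the symmetric matrix `δG` has all eigenvalues in `(-1, 1)`.
-/

open Matrix

/-- The spectral radius of a real matrix: the supremum of the absolute
values of its (real) eigenvalues. -/
noncomputable def specRad {n : ℕ} (G : Matrix (Fin n) (Fin n) ℝ) : ℝ :=
  sSup ((fun l => |l|) '' spectrum ℝ G)

open Filter Topology Finset

namespace Matrix

variable {ι : Type*} [Fintype ι] [DecidableEq ι]

theorem IsHermitian.tendsto_pow_atTop_nhds_zero {𝕜 : Type*} [RCLike 𝕜] {A : Matrix ι ι 𝕜}
    (hA : A.IsHermitian) (h : ∀ i, |hA.eigenvalues i| < 1) :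
    Tendsto (A ^ ·) atTop (𝓝 0) := by
  set U : Matrix ι ι 𝕜 := (hA.eigenvectorUnitary : Matrix ι ι 𝕜)
  have hdiag : Tendsto (fun N : ℕ => diagonal (RCLike.ofReal ∘ hA.eigenvalues) ^ N)
      atTop (𝓝 (0 : Matrix ι ι 𝕜)) := by
    simp_rw [diagonal_pow, ← diagonal_zero]
    refine (continuous_id.matrix_diagonal.tendsto _).comp (tendsto_pi_nhds.2 fun i => ?_)
    refine tendsto_pow_atTop_nhds_zero_of_norm_lt_one ?_
    simpa using h i
  have hconj : Tendsto (fun N : ℕ => U * diagonal (RCLike.ofReal ∘ hA.eigenvalues) ^ N * star U)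
      atTop (𝓝 0) := by
    simpa using (hdiag.const_mul U).mul_const (star U)
  convert hconj using 2 with N
  conv_lhs => rw [hA.spectral_theorem, ← map_pow]
  rfl

theorem isUnit_det_one_sub_of_tendsto_pow {𝕜 : Type*} [Field 𝕜] [TopologicalSpace 𝕜]
    [IsTopologicalRing 𝕜] [T2Space 𝕜] {A : Matrix ι ι 𝕜}
    (hA : Tendsto (A ^ ·) atTop (𝓝 0)) : IsUnit (1 - A).det := by
  rw [isUnit_iff_ne_zero]
  intro h0
  have hdet : Tendsto (fun N : ℕ => (1 - A ^ N).det) atTop (𝓝 (1 - 0 : Matrix ι ι 𝕜).det) :=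
    (continuous_id.matrix_det.tendsto _).comp (tendsto_const_nhds.sub hA)
  have hzero : ∀ N : ℕ, (1 - A ^ N).det = 0 := fun N => by
    rw [← geom_sum_mul_neg, det_mul, h0, mul_zero]
  simp only [hzero, sub_zero, det_one] at hdet
  exact zero_ne_one (tendsto_nhds_unique tendsto_const_nhds hdet)

omit [DecidableEq ι] in
theorem mul_apply_nonneg {A B : Matrix ι ι ℝ} (hA : ∀ i j, 0 ≤ A i j) (hB : ∀ i j, 0 ≤ B i j)
    (i j : ι) : 0 ≤ (A * B) i j :=
  Finset.sum_nonneg fun k _ => mul_nonneg (hA i k) (hB k j)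

omit [Fintype ι] in
theorem smul_one_add_smul_apply_nonneg {a b : ℝ} {G : Matrix ι ι ℝ} (ha : 0 ≤ a) (hb : 0 ≤ b)
    (hG : ∀ i j, 0 ≤ G i j) (i j : ι) : 0 ≤ (a • (1 : Matrix ι ι ℝ) + b • G) i j := by
  have hbG := mul_nonneg hb (hG i j)
  simp only [add_apply, smul_apply, one_apply, smul_eq_mul]
  split_ifs <;> linarith

theorem inv_one_sub_apply_nonneg {A : Matrix ι ι ℝ} (hA : ∀ i j, 0 ≤ A i j)
    (hpow : Tendsto (A ^ ·) atTop (𝓝 0)) (i j : ι) : 0 ≤ (1 - A)⁻¹ i j := by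
  set M := (1 - A)⁻¹
  have hM : (1 - A) * M = 1 := mul_nonsing_inv _ (isUnit_det_one_sub_of_tendsto_pow hpow)
  have hpartial : ∀ N : ℕ, ∑ k ∈ range N, A ^ k = (1 - A ^ N) * M := fun N => by
    rw [← geom_sum_mul_neg, Matrix.mul_assoc, hM, Matrix.mul_one]
  have hlim : Tendsto (fun N : ℕ => ∑ k ∈ range N, A ^ k) atTop (𝓝 M) := by
    simpa [hpartial] using ((tendsto_const_nhds (x := 1)).sub hpow).mul_const M
  refine ge_of_tendsto' (tendsto_pi_nhds.1 (tendsto_pi_nhds.1 hlim i) j) fun N => ?_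
  simpa [Matrix.sum_apply] using Finset.sum_nonneg fun k _ => pow_apply_nonneg hA k i j

end Matrix

theorem abs_le_specRad {n : ℕ} (G : Matrix (Fin n) (Fin n) ℝ) {l : ℝ} (hl : l ∈ spectrum ℝ G) :
    |l| ≤ specRad G :=
  le_csSup ((G.finite_real_spectrum.image _).bddAbove) ⟨l, hl, rfl⟩

theorem abs_lt_one_of_mem_spectrum_smul {n : ℕ} {G : Matrix (Fin n) (Fin n) ℝ} {δ l : ℝ}
    (hδ : 0 < δ) (hρ : δ * specRad G < 1) (hl : l ∈ spectrum ℝ (δ • G)) : |l| < 1 := by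
  rw [← Units.val_mk0 hδ.ne', ← Units.smul_def, spectrum.unit_smul_eq_smul] at hl
  obtain ⟨l', hl', rfl⟩ := hl
  simp only [Units.val_mk0, smul_eq_mul, abs_mul, abs_of_pos hδ]
  exact (mul_le_mul_of_nonneg_left (abs_le_specRad G hl') hδ.le).trans_lt hρ

theorem Matrix.IsSymm.tendsto_smul_pow_atTop_nhds_zero {n : ℕ} {G : Matrix (Fin n) (Fin n) ℝ}
    (hG : G.IsSymm) {δ : ℝ} (hδ : 0 < δ) (hρ : δ * specRad G < 1) :
    Tendsto ((δ • G) ^ ·) atTop (𝓝 0) :=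
  have hδG : (δ • G).IsHermitian := isHermitian_iff_isSymm.2 (hG.smul δ)
  hδG.tendsto_pow_atTop_nhds_zero fun k =>
    abs_lt_one_of_mem_spectrum_smul hδ hρ (hδG.eigenvalues_mem_spectrum_real k)

section

variable {k R : Type*} [CommRing k] [Ring R] [Module k R] [IsScalarTower k R R]
  [SMulCommClass k R R]

theorem smul_one_sub_smul_mul_self (β μ : k) (g : R) :
    (β • 1 - μ • g) * (β • 1 - μ • g) = β ^ 2 • 1 + μ ^ 2 • (g * g) - (2 * β * μ) • g := by
  simp only [mul_sub, sub_mul, smul_mul_assoc, mul_smul_comm, mul_one, one_mul]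
  module

theorem smul_add_mul_self_mul_eq {g m : R} (β δ ε : k) (hm : (1 - δ • g) * m = 1) :
    δ • g + (β • (1 - δ • g) + ε • g) * (β • (1 - δ • g) + ε • g) * m =
      β ^ 2 • 1 + ((1 - β ^ 2) * δ) • g + ((2 * β * ε) • g + ε ^ 2 • (g * g * m)) := by
  set a := 1 - δ • g
  have hcomm : g * a = a * g := by simp [a, mul_sub, sub_mul, smul_mul_assoc, mul_smul_comm]
  have hsq : (β • a + ε • g) * (β • a + ε • g) =
      β ^ 2 • (a * a) + (2 * β * ε) • (g * a) + ε ^ 2 • (g * g) := by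
    simp only [add_mul, mul_add, smul_mul_assoc, mul_smul_comm, ← hcomm]
    module
  rw [hsq, add_mul, add_mul, smul_mul_assoc, smul_mul_assoc, smul_mul_assoc, mul_assoc a,
    mul_assoc g a, hm, mul_one, mul_one]
  module

end

theorem stmt6_general {n : ℕ} (G : Matrix (Fin n) (Fin n) ℝ)
    (hGsymm : G.IsSymm) (hGnn : ∀ i j, 0 ≤ G i j)
    (β δ μ : ℝ) (hβ0 : 0 < β) (hβ1 : β < 1) (hδ : 0 < δ)
    (hdom : μ < β * δ) (hρ : δ * specRad G < 1) :
    (∀ i j,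
        0 ≤ (δ • G +
              (β ^ 2 • (1 : Matrix (Fin n) (Fin n) ℝ) + μ ^ 2 • (G * G) -
                  (2 * β * μ) • G) *
                ((1 : Matrix (Fin n) (Fin n) ℝ) - δ • G)⁻¹) i j) ∧
    (∀ i j,
        (β ^ 2 • (1 : Matrix (Fin n) (Fin n) ℝ) + ((1 - β ^ 2) * δ) • G) i j ≤
          (δ • G +
              ((β • (1 : Matrix (Fin n) (Fin n) ℝ) - μ • G) *
                  (β • (1 : Matrix (Fin n) (Fin n) ℝ) - μ • G)) *
                ((1 : Matrix (Fin n) (Fin n) ℝ) - δ • G)⁻¹) i j) := by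
  set M := (1 - δ • G)⁻¹
  have hpow := hGsymm.tendsto_smul_pow_atTop_nhds_zero hδ hρ
  have hM : (1 - δ • G) * M = 1 := mul_nonsing_inv _ (isUnit_det_one_sub_of_tendsto_pow hpow)
  have hMnn : ∀ i j, 0 ≤ M i j :=
    inv_one_sub_apply_nonneg (fun i j => smul_nonneg hδ.le (hGnn i j)) hpow
  have hlower : ∀ i j, (β ^ 2 • (1 : Matrix (Fin n) (Fin n) ℝ) + ((1 - β ^ 2) * δ) • G) i j ≤
      (δ • G + (β • 1 - μ • G) * (β • 1 - μ • G) * M) i j := by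
    intro i j
    have hsplit : β • (1 : Matrix (Fin n) (Fin n) ℝ) - μ • G =
        β • (1 - δ • G) + (β * δ - μ) • G := by module
    have hε : 0 ≤ β * δ - μ := sub_nonneg.2 hdom.le
    have hGGM := mul_apply_nonneg (mul_apply_nonneg hGnn hGnn) hMnn i j
    have hGij := hGnn i j
    rw [hsplit, smul_add_mul_self_mul_eq _ _ _ hM, Matrix.add_apply _ _ i j]
    refine le_add_of_nonneg_right ?_
    simp only [Matrix.add_apply, Matrix.smul_apply, smul_eq_mul]
    positivity
  have hβ : 0 ≤ 1 - β ^ 2 := by nlinarith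
  have hbase := smul_one_add_smul_apply_nonneg (sq_nonneg β) (mul_nonneg hβ hδ.le) hGnn
  exact ⟨fun i j => smul_one_sub_smul_mul_self β μ G ▸ (hbase i j).trans (hlower i j), hlower⟩

theorem stmt6 {n : ℕ} (G : Matrix (Fin n) (Fin n) ℝ)
    (hGsymm : G.IsSymm) (hGnn : ∀ i j, 0 ≤ G i j)
    (β δ μ : ℝ) (hβ0 : 0 < β) (hβ1 : β < 1) (hδ : 0 < δ) (hμ0 : 0 < μ)
    (hdom : μ < β * δ) (hρ : δ * specRad G < 1) :
    (∀ i j,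
        0 ≤ (δ • G +
              (β ^ 2 • (1 : Matrix (Fin n) (Fin n) ℝ) + μ ^ 2 • (G * G) -
                  (2 * β * μ) • G) *
                ((1 : Matrix (Fin n) (Fin n) ℝ) - δ • G)⁻¹) i j) ∧
    (∀ i j,
        (β ^ 2 • (1 : Matrix (Fin n) (Fin n) ℝ) + ((1 - β ^ 2) * δ) • G) i j ≤
          (δ • G +
              ((β • (1 : Matrix (Fin n) (Fin n) ℝ) - μ • G) *
                  (β • (1 : Matrix (Fin n) (Fin n) ℝ) - μ • G)) *
                ((1 : Matrix (Fin n) (Fin n) ℝ) - δ • G)⁻¹) i j) :=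
  stmt6_general G hGsymm hGnn β δ μ hβ0 hβ1 hδ hdom hρ
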